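/- (Theorem 2, case (ii), geometric-entanglement form.) Let d ≥ 2, N ≥ 1, t ≥ 1 be integers with t < N, let ε ≥ 0, and set D = d^N. Let ν be a Borel probability measure on the unit sphere of the N-qudit Hilbert space such that for every product state v, ∫ |⟨v, ψ⟩|^(2t) dν(ψ) ≤ (1+ε) · t! · (D−1)! / (t+D−1)!. Then the ν-probability that there exists a product state u with |⟨u, ψ⟩|² ≥ N^((2d+5)·N/t)/d^N (equivalently, geometric entanglement E_g(ψ) ≤ N·ln d − (2d+5)·t⁻¹·N·ln N) is at most (1+ε) · exp(−N·ln N + 6·d·N). -/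

import Mathlib

open MeasureTheory
open Metric Module
open scoped ComplexInnerProductSpace ENNReal

/-- An `N`-qudit product state (local dimension `d`): a vector of the form
`u x = ∏ i, f i (x i)` where each local vector `f i : Fin d → ℂ` is a unit vector. -/
def IsProductState (d N : ℕ) (u : EuclideanSpace ℂ (Fin N → Fin d)) : Prop :=
  ∃ f : Fin N → Fin d → ℂ,
    (∀ i, ∑ a, ‖f i a‖ ^ 2 = 1) ∧ ∀ x, u x = ∏ i, f i (x i)

lemma exists_sphere_net (E : Type*) [NormedAddCommGroup E] [NormedSpace ℝ E]
    [FiniteDimensional ℝ E] {η : ℝ} (hη : 0 < η) :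
    ∃ F : Finset E, (∀ v ∈ F, ‖v‖ = 1) ∧
      ((F.card : ℝ) ≤ (1 + 2 / η) ^ (finrank ℝ E)) ∧
      ∀ x : E, ‖x‖ = 1 → ∃ y ∈ F, dist x y ≤ η := by
  classical
  borelize E
  set n := finrank ℝ E with hn
  set μ : Measure E := (Module.finBasis ℝ E).addHaar with hμ
  have hB0 : μ (ball (0:E) 1) ≠ 0 := (measure_ball_pos μ 0 one_pos).ne'
  have hBt : μ (ball (0:E) 1) ≠ ⊤ := measure_ball_lt_top.ne
  have key : ∀ F : Finset E, (∀ v ∈ F, ‖v‖ = 1) →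
      (∀ x ∈ F, ∀ y ∈ F, x ≠ y → η ≤ dist x y) → (F.card : ℝ) ≤ (1 + 2/η) ^ n := by
    intro F hFs hFsep
    have hdisj : (F : Set E).PairwiseDisjoint (fun x => ball x (η/2)) := by
      intro x hx y hy hxy
      exact ball_disjoint_ball (by linarith [hFsep x hx y hy hxy])
    have hmeas : μ (⋃ x ∈ F, ball x (η/2)) = ∑ x ∈ F, μ (ball x (η/2)) :=
      measure_biUnion_finset hdisj (fun b _ => measurableSet_ball)
    have hsub : (⋃ x ∈ F, ball x (η/2)) ⊆ ball (0:E) (1 + η/2) := by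
      intro z hz
      simp only [Set.mem_iUnion] at hz
      obtain ⟨x, hx, hzx⟩ := hz
      have h3 : dist z (0:E) ≤ dist z x + dist x 0 := dist_triangle _ _ _
      have hx1 : dist x (0:E) = 1 := by simpa [dist_eq_norm] using hFs x hx
      rw [mem_ball] at hzx ⊢; linarith
    have hcount : (F.card : ℝ≥0∞) * (ENNReal.ofReal ((η/2)^n) * μ (ball 0 1))
        ≤ ENNReal.ofReal ((1+η/2)^n) * μ (ball 0 1) := by
      calc (F.card : ℝ≥0∞) * (ENNReal.ofReal ((η/2)^n) * μ (ball 0 1))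
          = ∑ _x ∈ F, (ENNReal.ofReal ((η/2)^n) * μ (ball 0 1)) := by
            simp [Finset.sum_const, mul_comm]
        _ = ∑ x ∈ F, μ (ball x (η/2)) :=
            (Finset.sum_congr rfl (fun x _ =>
              (Measure.addHaar_ball_of_pos μ x (by linarith)).symm))
        _ = μ (⋃ x ∈ F, ball x (η/2)) := hmeas.symm
        _ ≤ μ (ball (0:E) (1 + η/2)) := measure_mono hsub
        _ = ENNReal.ofReal ((1+η/2)^n) * μ (ball 0 1) :=
            Measure.addHaar_ball_of_pos μ 0 (by linarith)
    rw [← mul_assoc, ENNReal.mul_le_mul_iff_left hB0 hBt] at hcount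
    have h2 : ENNReal.ofReal ((F.card : ℝ) * (η/2)^n) ≤ ENNReal.ofReal ((1+η/2)^n) := by
      rw [ENNReal.ofReal_mul (by positivity)]
      simpa [ENNReal.ofReal_natCast] using hcount
    have h3 : (F.card : ℝ) * (η/2)^n ≤ (1+η/2)^n :=
      (ENNReal.ofReal_le_ofReal_iff (by positivity)).mp h2
    have hpow : (0:ℝ) < (η/2)^n := by positivity
    rw [← le_div_iff₀ hpow] at h3
    refine h3.trans ?_
    rw [div_eq_mul_inv, ← inv_pow, ← mul_pow]
    refine pow_le_pow_left₀ (by positivity) ?_ n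
    rw [mul_inv_le_iff₀ (by positivity)]
    have : (0:ℝ) < η := hη
    field_simp
    ring_nf
    nlinarith
  -- maximal separated set
  set A : Set ℕ := {m | ∃ F : Finset E, (∀ v ∈ F, ‖v‖ = 1) ∧
      (∀ x ∈ F, ∀ y ∈ F, x ≠ y → η ≤ dist x y) ∧ F.card = m} with hA
  have hA0 : 0 ∈ A := ⟨∅, by simp⟩
  have hAbdd : BddAbove A := by
    refine ⟨Nat.ceil ((1 + 2/η)^n), ?_⟩
    rintro m ⟨F, hFs, hFsep, rfl⟩
    have : (F.card : ℝ) ≤ ((Nat.ceil ((1 + 2/η)^n) : ℕ) : ℝ) :=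
      (key F hFs hFsep).trans (Nat.le_ceil _)
    exact_mod_cast this
  obtain ⟨F, hFs, hFsep, hcard⟩ := Nat.sSup_mem ⟨0, hA0⟩ hAbdd
  refine ⟨F, hFs, key F hFs hFsep, ?_⟩
  intro x hx
  by_contra hcon
  push_neg at hcon
  have hxF : x ∉ F := fun hxF => absurd (dist_self x) (by
    have := hcon x hxF
    intro h; rw [h] at this; exact absurd this (not_lt.mpr hη.le))
  have hmem : F.card + 1 ∈ A := by
    refine ⟨insert x F, ?_, ?_, by rw [Finset.card_insert_of_notMem hxF]⟩
    · intro v hv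
      rcases Finset.mem_insert.mp hv with rfl | hv
      · exact hx
      · exact hFs v hv
    · intro a ha b hb hab
      rcases Finset.mem_insert.mp ha with h1 | h1
      · rcases Finset.mem_insert.mp hb with h2 | h2
        · exact absurd (h1.trans h2.symm) hab
        · subst h1; exact (hcon b h2).le
      · rcases Finset.mem_insert.mp hb with h2 | h2
        · subst h2; rw [dist_comm]; exact (hcon a h1).le
        · exact hFsep a h1 b h2 hab
  have := le_csSup hAbdd hmem
  rw [hcard] at this
  omega


noncomputable def tensorVec (d N : ℕ) (g : Fin N → EuclideanSpace ℂ (Fin d)) :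
    EuclideanSpace ℂ (Fin N → Fin d) := WithLp.toLp 2 (fun x => ∏ i, g i (x i))

lemma sum_sq_of_norm_one {d : ℕ} {v : EuclideanSpace ℂ (Fin d)} (h : ‖v‖ = 1) :
    ∑ a, ‖v a‖ ^ 2 = 1 := by
  have h0 : (0:ℝ) ≤ ∑ a, ‖v a‖ ^ 2 := by positivity
  have h1 := EuclideanSpace.norm_eq v
  have h2 := Real.sq_sqrt h0
  rw [← h1, h] at h2
  simpa using h2.symm

lemma norm_one_of_sum_sq {d : ℕ} {v : EuclideanSpace ℂ (Fin d)}
    (h : ∑ a, ‖v a‖ ^ 2 = 1) : ‖v‖ = 1 := by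
  rw [EuclideanSpace.norm_eq, h, Real.sqrt_one]

lemma sum_sq_tensorVec {d N : ℕ} (g : Fin N → EuclideanSpace ℂ (Fin d)) :
    ∑ x : Fin N → Fin d, ‖tensorVec d N g x‖ ^ 2 = ∏ i, ∑ a, ‖g i a‖ ^ 2 := by
  rw [Finset.prod_univ_sum]
  rw [Fintype.piFinset_univ]
  refine Finset.sum_congr rfl fun x _ => ?_
  simp [tensorVec, norm_prod, Finset.prod_pow]

lemma norm_tensorVec {d N : ℕ} (g : Fin N → EuclideanSpace ℂ (Fin d))
    (hg : ∀ i, ‖g i‖ = 1) : ‖tensorVec d N g‖ = 1 := by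
  rw [EuclideanSpace.norm_eq, sum_sq_tensorVec]
  rw [Finset.prod_congr rfl fun i _ => sum_sq_of_norm_one (hg i)]
  simp

lemma isProductState_tensorVec {d N : ℕ} (g : Fin N → EuclideanSpace ℂ (Fin d))
    (hg : ∀ i, ‖g i‖ = 1) : IsProductState d N (tensorVec d N g) :=
  ⟨fun i a => g i a, fun i => sum_sq_of_norm_one (hg i), fun _ => rfl⟩

lemma IsProductState.exists_tensor {d N : ℕ} {u : EuclideanSpace ℂ (Fin N → Fin d)}
    (h : IsProductState d N u) : ∃ g : Fin N → EuclideanSpace ℂ (Fin d),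
      (∀ i, ‖g i‖ = 1) ∧ u = tensorVec d N g := by
  obtain ⟨f, hf, hu⟩ := h
  exact ⟨fun i => WithLp.toLp 2 (f i), fun i => norm_one_of_sum_sq (hf i), PiLp.ext hu⟩

lemma IsProductState.norm_eq_one {d N : ℕ} {u : EuclideanSpace ℂ (Fin N → Fin d)}
    (h : IsProductState d N u) : ‖u‖ = 1 := by
  obtain ⟨g, hg, rfl⟩ := h.exists_tensor
  exact norm_tensorVec g hg

lemma tensor_slot_diff {d N : ℕ} (ψ : EuclideanSpace ℂ (Fin N → Fin d)) {S : ℝ}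
    (hS : ∀ v, IsProductState d N v → ‖⟪v, ψ⟫‖ ≤ S) (hS0 : 0 ≤ S)
    (f g : Fin N → EuclideanSpace ℂ (Fin d)) (hf : ∀ i, ‖f i‖ = 1) (hg : ∀ i, ‖g i‖ = 1)
    (k : Fin N) (hfg : ∀ i, i ≠ k → f i = g i) :
    ‖⟪tensorVec d N g, ψ⟫ - ⟪tensorVec d N f, ψ⟫‖ ≤ ‖g k - f k‖ * S := by
  classical
  by_cases hkeq : g k = f k
  · have : g = f := by
      funext i
      by_cases hik : i = k
      · subst hik; exact hkeq
      · exact (hfg i hik).symm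
    rw [this, sub_self, norm_zero]
    exact mul_nonneg (norm_nonneg _) hS0
  · set w : EuclideanSpace ℂ (Fin d) := g k - f k with hw
    have hwne : w ≠ 0 := sub_ne_zero.mpr hkeq
    set c : ℝ := ‖w‖ with hc
    have hcpos : 0 < c := norm_pos_iff.mpr hwne
    set e : EuclideanSpace ℂ (Fin d) := ((c : ℂ))⁻¹ • w with he
    have hce : w = (c : ℂ) • e := by
      rw [he, smul_smul, mul_inv_cancel₀ (by exact_mod_cast hcpos.ne'), one_smul]
    have hene : ‖e‖ = 1 := by
      rw [he, norm_smul, norm_inv, Complex.norm_real, Real.norm_eq_abs,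
        abs_of_pos hcpos, ← hc, inv_mul_cancel₀ hcpos.ne']
    -- pointwise product splitting
    have hsplit : ∀ (h : Fin N → EuclideanSpace ℂ (Fin d)) (x : Fin N → Fin d),
        tensorVec d N h x = h k (x k) * ∏ i ∈ Finset.univ.erase k, h i (x i) := by
      intro h x
      rw [tensorVec, WithLp.ofLp_toLp, ← Finset.mul_prod_erase Finset.univ _ (Finset.mem_univ k)]
    have hrest : ∀ (a : EuclideanSpace ℂ (Fin d)) (x : Fin N → Fin d),
        ∏ i ∈ Finset.univ.erase k, (Function.update f k a) i (x i)
          = ∏ i ∈ Finset.univ.erase k, f i (x i) := by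
      intro a x
      refine Finset.prod_congr rfl fun i hi => ?_
      rw [Function.update_of_ne (Finset.ne_of_mem_erase hi)]
    have hdiff : tensorVec d N g - tensorVec d N f
        = (c : ℂ) • tensorVec d N (Function.update f k e) := by
      ext x
      show tensorVec d N g x - tensorVec d N f x = ((c:ℂ) • tensorVec d N (Function.update f k e)) x
      have hsmul : ((c:ℂ) • tensorVec d N (Function.update f k e)) x
          = (c:ℂ) * tensorVec d N (Function.update f k e) x := rfl
      rw [hsmul, hsplit g x, hsplit f x, hsplit (Function.update f k e) x, hrest]
      have hgP : ∏ i ∈ Finset.univ.erase k, g i (x i) = ∏ i ∈ Finset.univ.erase k, f i (x i) :=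
        Finset.prod_congr rfl fun i hi => by
          rw [(hfg i (Finset.ne_of_mem_erase hi)).symm]
      rw [hgP, Function.update_self]
      have : g k (x k) - f k (x k) = (c:ℂ) * e (x k) := by
        have h1 : w (x k) = g k (x k) - f k (x k) := rfl
        have h2 : w (x k) = ((c:ℂ) • e) (x k) := by rw [← hce]
        have h3 : ((c:ℂ) • e) (x k) = (c:ℂ) * e (x k) := rfl
        rw [← h1, h2, h3]
      linear_combination (∏ i ∈ Finset.univ.erase k, f i (x i)) * this
    have hprod : IsProductState d N (tensorVec d N (Function.update f k e)) := by
      refine isProductState_tensorVec _ fun i => ?_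
      by_cases hik : i = k
      · subst hik; rw [Function.update_self]; exact hene
      · rw [Function.update_of_ne hik]; exact hf i
    calc ‖⟪tensorVec d N g, ψ⟫ - ⟪tensorVec d N f, ψ⟫‖
        = ‖⟪tensorVec d N g - tensorVec d N f, ψ⟫‖ := by rw [inner_sub_left]
      _ = ‖⟪(c:ℂ) • tensorVec d N (Function.update f k e), ψ⟫‖ := by rw [hdiff]
      _ = c * ‖⟪tensorVec d N (Function.update f k e), ψ⟫‖ := by
          rw [inner_smul_left]
          rw [norm_mul, RCLike.norm_conj, Complex.norm_real, Real.norm_eq_abs,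
            abs_of_pos hcpos]
      _ ≤ c * S := by
          have := hS _ hprod
          exact mul_le_mul_of_nonneg_left this hcpos.le

lemma hybrid_net_bound {d N : ℕ} (ψ : EuclideanSpace ℂ (Fin N → Fin d)) {S η : ℝ}
    (hS : ∀ v, IsProductState d N v → ‖⟪v, ψ⟫‖ ≤ S) (hS0 : 0 ≤ S) (hη : 0 ≤ η)
    (f g : Fin N → EuclideanSpace ℂ (Fin d)) (hf : ∀ i, ‖f i‖ = 1) (hg : ∀ i, ‖g i‖ = 1)
    (hclose : ∀ i, ‖f i - g i‖ ≤ η) :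
    ‖⟪tensorVec d N f, ψ⟫‖ ≤ ‖⟪tensorVec d N g, ψ⟫‖ + N * (η * S) := by
  classical
  set mix : ℕ → (Fin N → EuclideanSpace ℂ (Fin d)) :=
    fun m i => if (i : ℕ) < m then g i else f i with hmix
  have hmix0 : mix 0 = f := by funext i; simp [hmix]
  have hmixN : mix N = g := by funext i; simp [hmix, i.isLt]
  have hmixnorm : ∀ m i, ‖mix m i‖ = 1 := by
    intro m i
    by_cases h : (i : ℕ) < m <;> simp [hmix, h, hf i, hg i]
  have step : ∀ m : ℕ, m < N →
      ‖⟪tensorVec d N (mix m), ψ⟫‖ ≤ ‖⟪tensorVec d N (mix (m+1)), ψ⟫‖ + η * S := by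
    intro m hm
    set k : Fin N := ⟨m, hm⟩ with hk
    have hfg' : ∀ i, i ≠ k → mix m i = mix (m+1) i := by
      intro i hik
      have : (i : ℕ) ≠ m := fun h => hik (Fin.ext h)
      by_cases h : (i : ℕ) < m
      · simp [hmix, h, Nat.lt_succ_of_lt h]
      · have h2 : ¬ (i : ℕ) < m + 1 := by omega
        simp [hmix, h, h2]
    have hdiff := tensor_slot_diff ψ hS hS0 (mix m) (mix (m+1))
      (hmixnorm m) (hmixnorm (m+1)) k hfg'
    have hk1 : mix (m+1) k = g k := by simp [hmix, hk]
    have hk0 : mix m k = f k := by simp [hmix, hk]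
    have hkb : ‖mix (m+1) k - mix m k‖ ≤ η := by
      rw [hk1, hk0, ← norm_neg]
      simpa [neg_sub] using hclose k
    have htri : ‖⟪tensorVec d N (mix m), ψ⟫‖ ≤ ‖⟪tensorVec d N (mix (m+1)), ψ⟫‖ +
        ‖⟪tensorVec d N (mix (m+1)), ψ⟫ - ⟪tensorVec d N (mix m), ψ⟫‖ := by
      have := norm_sub_norm_le (⟪tensorVec d N (mix (m+1)), ψ⟫)
        (⟪tensorVec d N (mix m), ψ⟫)
      have h2 := norm_sub_norm_le (⟪tensorVec d N (mix m), ψ⟫)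
        (⟪tensorVec d N (mix (m+1)), ψ⟫)
      rw [norm_sub_rev] at h2
      linarith
    refine htri.trans ?_
    have : ‖mix (m+1) k - mix m k‖ * S ≤ η * S := mul_le_mul_of_nonneg_right hkb hS0
    linarith [hdiff]
  have main : ∀ m, m ≤ N →
      ‖⟪tensorVec d N f, ψ⟫‖ ≤ ‖⟪tensorVec d N (mix m), ψ⟫‖ + m * (η * S) := by
    intro m
    induction m with
    | zero => intro _; simp [hmix0]
    | succ m ih =>
      intro hm
      have h1 := ih (by omega)
      have h2 := step m (by omega)
      push_cast
      have hηS : 0 ≤ η * S := mul_nonneg hη hS0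
      push_cast at h1
      nlinarith
  have := main N le_rfl
  rw [hmixN] at this
  exact this

lemma pow_mul_factorial_le (E t : ℕ) : (E + 1) ^ t * E.factorial ≤ (t + E).factorial := by
  induction t with
  | zero => simp
  | succ t ih =>
    have h1 : (E + 1) ^ (t + 1) * E.factorial = (E + 1) * ((E + 1) ^ t * E.factorial) := by ring
    have h2 : (t + 1 + E).factorial = (t + E + 1) * (t + E).factorial := by
      rw [show t + 1 + E = t + E + 1 by ring, Nat.factorial_succ]
    rw [h1, h2]
    exact Nat.mul_le_mul (by omega) ih

lemma core_numeric (d N t : ℕ) (hd : 2 ≤ d) (hN : 2 ≤ N) (htN : t < N) :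
    ((1 + 4 * (N : ℝ)) ^ (2 * d)) ^ N * (t.factorial : ℝ) * 4 ^ t ≤
      Real.exp (6 * (d : ℝ) * N) * (N : ℝ) ^ ((2 * d + 4) * N) := by
  have hNr : (2 : ℝ) ≤ (N : ℝ) := by exact_mod_cast hN
  have hfact : (t.factorial : ℝ) ≤ (N : ℝ) ^ N := by
    have h1 : t.factorial ≤ N ^ N :=
      (Nat.factorial_le_pow t).trans ((Nat.pow_le_pow_left htN.le t).trans
        (Nat.pow_le_pow_right (by omega) htN.le))
    exact_mod_cast h1
  have hcube : (4 : ℝ) ≤ (N : ℝ) ^ 3 := by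
    have h8 : (2 : ℝ) ^ 3 ≤ (N : ℝ) ^ 3 := pow_le_pow_left₀ (by norm_num) hNr 3
    norm_num at h8
    linarith
  have hfin : (5 : ℝ) ^ (2 * d * N) * 4 ^ N ≤ 2 ^ (6 * d * N) * (N : ℝ) ^ (3 * N) := by
    have h1 : (5 : ℝ) ^ (2 * d * N) = 25 ^ (d * N) := by
      rw [show 2 * d * N = 2 * (d * N) by ring, pow_mul]; norm_num
    have h2 : (2 : ℝ) ^ (6 * d * N) = 64 ^ (d * N) := by
      rw [show 6 * d * N = 6 * (d * N) by ring, pow_mul]; norm_num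
    have h3 : (N : ℝ) ^ (3 * N) = ((N : ℝ) ^ 3) ^ N := pow_mul _ 3 N
    rw [h1, h2, h3]
    exact mul_le_mul (pow_le_pow_left₀ (by norm_num) (by norm_num) _)
      (pow_le_pow_left₀ (by norm_num) hcube _) (by positivity) (by positivity)
  have hexp : (2 : ℝ) ^ (6 * d * N) ≤ Real.exp (6 * (d : ℝ) * N) := by
    have h1 : (6 : ℝ) * d * N = ((6 * d * N : ℕ) : ℝ) * 1 := by push_cast; ring
    rw [h1, Real.exp_nat_mul]
    exact pow_le_pow_left₀ (by norm_num) (by linarith [Real.add_one_le_exp (1:ℝ)]) _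
  calc ((1 + 4 * (N : ℝ)) ^ (2 * d)) ^ N * (t.factorial : ℝ) * 4 ^ t
      ≤ ((5 * (N : ℝ)) ^ (2 * d)) ^ N * (N : ℝ) ^ N * 4 ^ N := by
        have hb : (1 + 4 * (N : ℝ)) ≤ 5 * N := by linarith
        have h4 : (4 : ℝ) ^ t ≤ 4 ^ N := pow_le_pow_right₀ (by norm_num) htN.le
        refine mul_le_mul (mul_le_mul ?_ hfact (by positivity) (by positivity)) h4
          (by positivity) (by positivity)
        exact pow_le_pow_left₀ (by positivity) (pow_le_pow_left₀ (by positivity) hb _) _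
    _ = (5 ^ (2 * d * N) * 4 ^ N) * ((N : ℝ) ^ (2 * d * N) * (N : ℝ) ^ N) := by
        rw [← pow_mul, mul_pow 5 (N:ℝ) (2*d*N)]; ring
    _ ≤ (2 ^ (6 * d * N) * (N : ℝ) ^ (3 * N)) * ((N : ℝ) ^ (2 * d * N) * (N : ℝ) ^ N) :=
        mul_le_mul_of_nonneg_right hfin (by positivity)
    _ ≤ Real.exp (6 * (d : ℝ) * N) * (N : ℝ) ^ ((2 * d + 4) * N) := by
        have hpoweq : (N : ℝ) ^ ((2 * d + 4) * N)
            = (N : ℝ) ^ (3 * N) * ((N : ℝ) ^ (2 * d * N) * (N : ℝ) ^ N) := by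
          rw [← pow_add, ← pow_add]
          congr 1
          ring
        rw [hpoweq, mul_assoc]
        exact mul_le_mul_of_nonneg_right hexp (by positivity)


set_option maxHeartbeats 1000000 in
/-- **Theorem 2, case (ii).** Let `t < N`. If a Borel probability measure
`ν` on the unit sphere of the `N`-qudit space satisfies the `t`-design overlap-moment bound
`∫ |⟨v,ψ⟩|^(2t) dν ≤ (1+ε) t!(D−1)!/(t+D−1)!` (`D = dᴺ`) for every product state `v`, then
the `ν`-probability that some product state `u` has `|⟨u,ψ⟩|² ≥ N^((2d+5)N/t)/dᴺ`
(i.e. `E_g(ψ) ≤ N ln d − (2d+5) t⁻¹ N ln N`) is at most `(1+ε) exp(−N ln N + 6dN)`. -/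
theorem design_tail_case_ii (d N t : ℕ) (hd : 2 ≤ d) (hN : 1 ≤ N) (ht : 1 ≤ t)
    (htN : t < N) (ε : ℝ) (hε : 0 ≤ ε)
    [MeasurableSpace (EuclideanSpace ℂ (Fin N → Fin d))]
    [BorelSpace (EuclideanSpace ℂ (Fin N → Fin d))]
    (ν : Measure (EuclideanSpace ℂ (Fin N → Fin d))) [IsProbabilityMeasure ν]
    (hsupp : ν (Metric.sphere (0 : EuclideanSpace ℂ (Fin N → Fin d)) 1) = 1)
    (hmom : ∀ v : EuclideanSpace ℂ (Fin N → Fin d), IsProductState d N v →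
      ∫ ψ, ‖⟪v, ψ⟫‖ ^ (2 * t) ∂ν ≤
        (1 + ε) * ((t.factorial : ℝ) * (d ^ N - 1).factorial) /
          ((t + d ^ N - 1).factorial : ℝ)) :
    (ν {ψ | ∃ u, IsProductState d N u ∧
        (N : ℝ) ^ (((2 * d + 5) * N : ℝ) / t) / (d : ℝ) ^ N ≤ ‖⟪u, ψ⟫‖ ^ 2}).toReal ≤
      (1 + ε) * Real.exp (-(N * Real.log N) + 6 * d * N) := by
  classical
  have hN2 : 2 ≤ N := by omega
  have hNr : (2 : ℝ) ≤ (N : ℝ) := by exact_mod_cast hN2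
  have hNpos : (0 : ℝ) < (N : ℝ) := by linarith
  have hdr : (2 : ℝ) ≤ (d : ℝ) := by exact_mod_cast hd
  have h1ε : (0 : ℝ) < 1 + ε := by linarith
  set δ : ℝ := (N : ℝ) ^ (((2 * d + 5) * N : ℝ) / t) / (d : ℝ) ^ N with hδ
  have hδpos : 0 < δ :=
    div_pos (Real.rpow_pos_of_pos hNpos _) (by positivity)
  -- net construction on the local space
  have hη : (0 : ℝ) < 1 / (2 * N) := by positivity
  obtain ⟨F, hFunit, hFcard, hFnet⟩ := exists_sphere_net (EuclideanSpace ℂ (Fin d)) hη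
  have hrank : finrank ℝ (EuclideanSpace ℂ (Fin d)) = 2 * d := by
    rw [finrank_real_of_complex, finrank_euclideanSpace_fin]
  rw [hrank] at hFcard
  have hFcard' : (F.card : ℝ) ≤ (1 + 4 * (N : ℝ)) ^ (2 * d) := by
    have h2 : (2 : ℝ) / (1 / (2 * N)) = 4 * N := by
      field_simp; ring
    rwa [h2] at hFcard
  set piF : Finset (Fin N → EuclideanSpace ℂ (Fin d)) :=
    Fintype.piFinset (fun _ => F) with hpiF
  set ε₀ : ℝ := (δ / 4) ^ t with hε₀
  have hε₀pos : 0 < ε₀ := by positivity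
  set Ag : (Fin N → EuclideanSpace ℂ (Fin d)) →
      Set (EuclideanSpace ℂ (Fin N → Fin d)) :=
    fun g => {ψ | ε₀ ≤ ‖⟪tensorVec d N g, ψ⟫‖ ^ (2 * t)} with hAg
  -- inclusion into the union of net events
  have hsub : {ψ : EuclideanSpace ℂ (Fin N → Fin d) | ∃ u, IsProductState d N u ∧
        δ ≤ ‖⟪u, ψ⟫‖ ^ 2} ⊆
      (⋃ g ∈ piF, Ag g) ∪ (Metric.sphere (0 : EuclideanSpace ℂ (Fin N → Fin d)) 1)ᶜ := by
    intro ψ hψ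
    by_cases hsph : ψ ∈ Metric.sphere (0 : EuclideanSpace ℂ (Fin N → Fin d)) 1
    · left
      obtain ⟨u, hu, hval⟩ := hψ
      have hψn : ‖ψ‖ = 1 := mem_sphere_zero_iff_norm.mp hsph
      set P : Set ℝ := {r | ∃ v, IsProductState d N v ∧ ‖⟪v, ψ⟫‖ = r} with hP
      have hPne : P.Nonempty := ⟨‖⟪u, ψ⟫‖, u, hu, rfl⟩
      have hPbdd : BddAbove P := by
        refine ⟨1, ?_⟩
        rintro r ⟨v, hv, rfl⟩
        calc ‖⟪v, ψ⟫‖ ≤ ‖v‖ * ‖ψ‖ := norm_inner_le_norm _ _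
          _ = 1 := by rw [hv.norm_eq_one, hψn, one_mul]
      set S := sSup P with hSdef
      have hS : ∀ v, IsProductState d N v → ‖⟪v, ψ⟫‖ ≤ S :=
        fun v hv => le_csSup hPbdd ⟨v, hv, rfl⟩
      have hS0 : 0 ≤ S := le_trans (norm_nonneg _) (hS u hu)
      have hFne : F.Nonempty := by
        obtain ⟨y, hy, -⟩ := hFnet (EuclideanSpace.single (⟨0, by omega⟩ : Fin d) (1 : ℂ))
          (by simp [EuclideanSpace.norm_single])
        exact ⟨y, hy⟩
      have hpiFne : piF.Nonempty := by
        refine ⟨fun _ => hFne.choose, ?_⟩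
        rw [hpiF, Fintype.mem_piFinset]
        intro i; exact hFne.choose_spec
      set M := piF.sup' hpiFne (fun g => ‖⟪tensorVec d N g, ψ⟫‖) with hM
      have hbound : ∀ r ∈ P, r ≤ M + (N : ℝ) * ((1 / (2 * N)) * S) := by
        rintro r ⟨v, hv, rfl⟩
        obtain ⟨f, hf, rfl⟩ := hv.exists_tensor
        have hchoice : ∀ i, ∃ y ∈ F, dist (f i) y ≤ 1 / (2 * N) :=
          fun i => hFnet (f i) (hf i)
        choose g hgF hgclose using hchoice
        have hgu : ∀ i, ‖g i‖ = 1 := fun i => hFunit _ (hgF i)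
        have hclose : ∀ i, ‖f i - g i‖ ≤ 1 / (2 * N) := by
          intro i; rw [← dist_eq_norm]; exact hgclose i
        have hhyb := hybrid_net_bound ψ hS hS0 hη.le f g hf hgu hclose
        have hgmem : g ∈ piF := by
          rw [hpiF, Fintype.mem_piFinset]; exact hgF
        have hle : ‖⟪tensorVec d N g, ψ⟫‖ ≤ M := by
          rw [hM]
          exact Finset.le_sup' (fun g => ‖⟪tensorVec d N g, ψ⟫‖) hgmem
        linarith
      have hSM : S ≤ M + S / 2 := by
        have h1 := csSup_le hPne hbound
        have harith : (N : ℝ) * ((1 / (2 * N)) * S) = S / 2 := by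
          field_simp
        rwa [harith] at h1
      have hsq : Real.sqrt δ ≤ ‖⟪u, ψ⟫‖ := by
        rw [show ‖⟪u, ψ⟫‖ = Real.sqrt (‖⟪u, ψ⟫‖ ^ 2) from
          (Real.sqrt_sq (norm_nonneg _)).symm]
        exact Real.sqrt_le_sqrt hval
      have hSδ : Real.sqrt δ ≤ S := hsq.trans (hS u hu)
      have hM2 : Real.sqrt δ / 2 ≤ M := by linarith
      obtain ⟨g, hgmem, hgeq⟩ :=
        Finset.exists_mem_eq_sup' hpiFne (fun g => ‖⟪tensorVec d N g, ψ⟫‖)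
      refine Set.mem_biUnion hgmem ?_
      show ε₀ ≤ ‖⟪tensorVec d N g, ψ⟫‖ ^ (2 * t)
      have h1 : Real.sqrt δ / 2 ≤ ‖⟪tensorVec d N g, ψ⟫‖ := by
        refine hM2.trans ?_
        rw [hM, hgeq]
      have hval2 : δ / 4 ≤ ‖⟪tensorVec d N g, ψ⟫‖ ^ 2 := by
        have h2 : (Real.sqrt δ / 2) ^ 2 = δ / 4 := by
          rw [div_pow, Real.sq_sqrt hδpos.le]; norm_num
        rw [← h2]
        exact pow_le_pow_left₀ (by positivity) h1 2
      calc ε₀ = (δ / 4) ^ t := rfl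
        _ ≤ (‖⟪tensorVec d N g, ψ⟫‖ ^ 2) ^ t :=
            pow_le_pow_left₀ (by positivity) hval2 t
        _ = ‖⟪tensorVec d N g, ψ⟫‖ ^ (2 * t) := by rw [← pow_mul]
    · right; exact hsph
  -- measure bookkeeping
  have hsphm : MeasurableSet (Metric.sphere (0 : EuclideanSpace ℂ (Fin N → Fin d)) 1) :=
    Metric.isClosed_sphere.measurableSet
  have hcompl : ν (Metric.sphere (0 : EuclideanSpace ℂ (Fin N → Fin d)) 1)ᶜ = 0 := by
    rw [measure_compl hsphm (measure_ne_top ν _), hsupp, measure_univ, tsub_self]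
  set B : ℝ := (1 + ε) * ((t.factorial : ℝ) * ((d ^ N - 1).factorial : ℕ)) /
      ((t + d ^ N - 1).factorial : ℝ) with hB
  have hD2 : 2 ≤ d ^ N := le_trans hd (Nat.le_self_pow (by omega) d)
  have hBnn : 0 ≤ B := by
    apply div_nonneg _ (by positivity)
    apply mul_nonneg h1ε.le
    positivity
  have hpoint : ∀ g ∈ piF, ν (Ag g) ≤ ENNReal.ofReal (B / ε₀) := by
    intro g hgmem
    have hgu : ∀ i, ‖g i‖ = 1 := fun i => hFunit _ ((Fintype.mem_piFinset).mp hgmem i)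
    have hprod : IsProductState d N (tensorVec d N g) := isProductState_tensorVec g hgu
    have hnorm1 : ‖tensorVec d N g‖ = 1 := norm_tensorVec g hgu
    have hcont : Continuous (fun ψ : EuclideanSpace ℂ (Fin N → Fin d) =>
        ‖⟪tensorVec d N g, ψ⟫‖ ^ (2 * t)) :=
      (continuous_const.inner continuous_id).norm.pow _
    have hae : ∀ᵐ ψ ∂ν, ψ ∈ Metric.sphere (0 : EuclideanSpace ℂ (Fin N → Fin d)) 1 := by
      rw [ae_iff]
      exact hcompl
    have hint : Integrable (fun ψ : EuclideanSpace ℂ (Fin N → Fin d) =>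
        ‖⟪tensorVec d N g, ψ⟫‖ ^ (2 * t)) ν := by
      refine Integrable.mono' (integrable_const 1) hcont.aestronglyMeasurable ?_
      filter_upwards [hae] with ψ hψ
      have h1 : ‖⟪tensorVec d N g, ψ⟫‖ ≤ 1 := by
        calc ‖⟪tensorVec d N g, ψ⟫‖ ≤ ‖tensorVec d N g‖ * ‖ψ‖ := norm_inner_le_norm _ _
          _ = 1 := by rw [hnorm1, mem_sphere_zero_iff_norm.mp hψ, one_mul]
      rw [Real.norm_eq_abs, abs_of_nonneg (by positivity)]
      exact pow_le_one₀ (norm_nonneg _) h1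
    have hmar := mul_meas_ge_le_integral_of_nonneg
      (ae_of_all ν fun ψ => by positivity) hint ε₀
    have hBv := hmom (tensorVec d N g) hprod
    have htoReal : (ν (Ag g)).toReal ≤ B / ε₀ := by
      rw [le_div_iff₀ hε₀pos]
      calc (ν (Ag g)).toReal * ε₀
          = ε₀ * (ν {ψ | ε₀ ≤ ‖⟪tensorVec d N g, ψ⟫‖ ^ (2 * t)}).toReal := by
            rw [mul_comm]
        _ ≤ ∫ ψ, ‖⟪tensorVec d N g, ψ⟫‖ ^ (2 * t) ∂ν := hmar
        _ ≤ B := hBv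
    exact (ENNReal.le_ofReal_iff_toReal_le (measure_ne_top ν _)
      (div_nonneg hBnn hε₀pos.le)).mpr htoReal
  have htotal : ν {ψ : EuclideanSpace ℂ (Fin N → Fin d) | ∃ u, IsProductState d N u ∧
        δ ≤ ‖⟪u, ψ⟫‖ ^ 2} ≤ ENNReal.ofReal ((piF.card : ℝ) * (B / ε₀)) := by
    calc ν {ψ : EuclideanSpace ℂ (Fin N → Fin d) | ∃ u, IsProductState d N u ∧
          δ ≤ ‖⟪u, ψ⟫‖ ^ 2}
        ≤ ν ((⋃ g ∈ piF, Ag g) ∪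
            (Metric.sphere (0 : EuclideanSpace ℂ (Fin N → Fin d)) 1)ᶜ) :=
          measure_mono hsub
      _ ≤ ν (⋃ g ∈ piF, Ag g) +
            ν (Metric.sphere (0 : EuclideanSpace ℂ (Fin N → Fin d)) 1)ᶜ :=
          measure_union_le _ _
      _ = ν (⋃ g ∈ piF, Ag g) := by rw [hcompl, add_zero]
      _ ≤ ∑ g ∈ piF, ν (Ag g) := measure_biUnion_finset_le _ _
      _ ≤ ∑ _g ∈ piF, ENNReal.ofReal (B / ε₀) := Finset.sum_le_sum hpoint
      _ = piF.card • ENNReal.ofReal (B / ε₀) := by rw [Finset.sum_const]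
      _ = ENNReal.ofReal ((piF.card : ℝ) * (B / ε₀)) := by
          rw [nsmul_eq_mul, ← ENNReal.ofReal_natCast piF.card,
            ← ENNReal.ofReal_mul (by positivity)]
  -- final numeric bound
  have hfinal : (piF.card : ℝ) * (B / ε₀) ≤
      (1 + ε) * Real.exp (-(N * Real.log N) + 6 * d * N) := by
    have hcardpi : (piF.card : ℝ) ≤ ((1 + 4 * (N : ℝ)) ^ (2 * d)) ^ N := by
      have h1 : piF.card = F.card ^ N := by
        rw [hpiF, Fintype.card_piFinset]
        simp [Finset.prod_const]
      rw [h1]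
      push_cast
      exact pow_le_pow_left₀ (by positivity) hFcard' N
    set E : ℕ := d ^ N - 1 with hE
    have hE1 : d ^ N = E + 1 := by omega
    have htE : t + d ^ N - 1 = t + E := by omega
    have hfac : ((d : ℝ) ^ N) ^ t * (E.factorial : ℝ) ≤ ((t + E).factorial : ℝ) := by
      have h1 : (d ^ N) ^ t * E.factorial ≤ (t + E).factorial := by
        rw [hE1]; exact pow_mul_factorial_le E t
      exact_mod_cast h1
    have hBle : B ≤ (1 + ε) * (t.factorial : ℝ) / ((d : ℝ) ^ N) ^ t := by
      rw [hB, show t + d ^ N - 1 = t + E from htE]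
      rw [div_le_div_iff₀ (by positivity) (by positivity)]
      have h2 : (E.factorial : ℝ) * ((d : ℝ) ^ N) ^ t ≤ ((t + E).factorial : ℝ) := by
        rw [mul_comm]; exact hfac
      calc (1 + ε) * ((t.factorial : ℝ) * (E.factorial : ℝ)) * ((d : ℝ) ^ N) ^ t
          = ((1 + ε) * (t.factorial : ℝ)) * ((E.factorial : ℝ) * ((d : ℝ) ^ N) ^ t) := by
            ring
        _ ≤ ((1 + ε) * (t.factorial : ℝ)) * ((t + E).factorial : ℝ) := by
            refine mul_le_mul_of_nonneg_left h2 ?_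
            positivity
        _ = (1 + ε) * (t.factorial : ℝ) * ((t + E).factorial : ℝ) := rfl
    have htne : (t : ℝ) ≠ 0 := by
      have : (0:ℝ) < t := by exact_mod_cast ht
      exact this.ne'
    have hrpow : ((N : ℝ) ^ (((2 * d + 5) * N : ℝ) / t)) ^ t = (N : ℝ) ^ ((2 * d + 5) * N) := by
      rw [← Real.rpow_natCast ((N : ℝ) ^ (((2 * d + 5) * N : ℝ) / t)) t,
        ← Real.rpow_mul hNpos.le, div_mul_cancel₀ _ htne,
        ← Real.rpow_natCast (N : ℝ) ((2 * d + 5) * N)]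
      congr 1
      push_cast
      ring
    have hε₀eq : ε₀ = (N : ℝ) ^ ((2 * d + 5) * N) / (4 ^ t * ((d : ℝ) ^ N) ^ t) := by
      rw [hε₀, div_pow, hδ, div_pow, hrpow]
      field_simp
    have hNt5pos : (0 : ℝ) < (N : ℝ) ^ ((2 * d + 5) * N) := by positivity
    have hcore := core_numeric d N t hd hN2 htN
    calc (piF.card : ℝ) * (B / ε₀)
        ≤ ((1 + 4 * (N : ℝ)) ^ (2 * d)) ^ N *
            (((1 + ε) * (t.factorial : ℝ) / ((d : ℝ) ^ N) ^ t) / ε₀) := by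
          refine mul_le_mul hcardpi ?_ (div_nonneg hBnn hε₀pos.le) (by positivity)
          exact (div_le_div_iff_of_pos_right hε₀pos).mpr hBle
      _ = (1 + ε) * ((((1 + 4 * (N : ℝ)) ^ (2 * d)) ^ N * (t.factorial : ℝ) * 4 ^ t) /
            (N : ℝ) ^ ((2 * d + 5) * N)) := by
          rw [hε₀eq]
          field_simp
      _ ≤ (1 + ε) * ((Real.exp (6 * (d : ℝ) * N) * (N : ℝ) ^ ((2 * d + 4) * N)) /
            (N : ℝ) ^ ((2 * d + 5) * N)) := by
          refine mul_le_mul_of_nonneg_left ?_ h1ε.le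
          exact (div_le_div_iff_of_pos_right hNt5pos).mpr hcore
      _ = (1 + ε) * Real.exp (-(N * Real.log N) + 6 * d * N) := by
          congr 1
          have hsplit : (N : ℝ) ^ ((2 * d + 5) * N) = (N : ℝ) ^ ((2 * d + 4) * N) * (N : ℝ) ^ N := by
            rw [← pow_add]
            congr 1
            ring
          have hexpN : Real.exp ((N : ℝ) * Real.log N) = (N : ℝ) ^ N := by
            rw [Real.exp_nat_mul, Real.exp_log hNpos]
          rw [show (-((N : ℝ) * Real.log N) + 6 * (d : ℝ) * N) =
            6 * (d : ℝ) * N - (N : ℝ) * Real.log N by ring, Real.exp_sub, hexpN, hsplit]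
          have hA : (0:ℝ) < (N : ℝ) ^ ((2 * d + 4) * N) := by positivity
          have hB' : (0:ℝ) < (N : ℝ) ^ N := by positivity
          field_simp
  calc (ν _).toReal ≤ ((ENNReal.ofReal ((piF.card : ℝ) * (B / ε₀)))).toReal :=
        ENNReal.toReal_mono ENNReal.ofReal_ne_top htotal
    _ = (piF.card : ℝ) * (B / ε₀) := ENNReal.toReal_ofReal (by positivity)
    _ ≤ _ := hfinal
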